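/- Let S be a left-sided convex point set of n points in general position and let P = d_1,...,d_{n-1} be a path whose labels all lie in {U,D,R}. Then P admits a planar direction-consistent embedding E on S; moreover E can be chosen so that E(v_n) equals t(S) if d_{n-1}=U, equals b(S) if d_{n-1}=D, and equals either t(S) or b(S) (namely the rightmost point of S) if d_{n-1}=R. -/

import Mathlib

/-!
Sorted by height, a left-sided convex point set is a *left chain* `p 0 = b, …, p m = t`: every
`p j` lies strictly left of the chord `p i p k` whenever `i < j < k` (otherwise `p j` would lie in
the convex hull of `p i`, `p k`, `b`, `t`). Embed the path backwards: according to the last label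
`U`, `D` or `R`, the vertex `v_m` goes to the top `t`, the bottom `b` or the rightmost of the two,
and `v_0, …, v_{m-1}` are embedded recursively on the remaining chain. Every edge is then
direction-consistent, and in chain order each `v_k` is the highest or the lowest of
`v_0, …, v_k`. For such orders the earlier vertices lie either all between or all outside the
endpoints of an edge `v_k v_{k+1}`, hence strictly on one side of its line, so the drawing is
planar.
-/

/-- Edge direction labels. -/
inductive Dir | U | D | L | R
deriving DecidableEq

/-- Opposite label: U↔D, L↔R. -/
def Dir.opp : Dir → Dir
  | .U => .D | .D => .U | .L => .R | .R => .L

/-- Label after counterclockwise rotation by π/2: U↦L, D↦R, R↦U, L↦D. -/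
def Dir.rot : Dir → Dir
  | .U => .L | .D => .R | .R => .U | .L => .D

/-- Label after vertical-line reflection: U↦U, D↦D, R↦L, L↦R. -/
def Dir.mir : Dir → Dir
  | .U => .U | .D => .D | .R => .L | .L => .R

/-- An edge from `a` to `b` is consistent with a direction label. -/
def dirOk : Dir → ℝ × ℝ → ℝ × ℝ → Prop
  | .U, a, b => a.2 < b.2
  | .D, a, b => b.2 < a.2
  | .R, a, b => a.1 < b.1
  | .L, a, b => b.1 < a.1

/-- The drawing of a path with edge labels `d` and vertex placement `E` is
direction-consistent. -/
def DirConsistent {m : ℕ} (d : Fin m → Dir) (E : Fin (m + 1) → ℝ × ℝ) : Prop :=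
  ∀ i : Fin m, dirOk (d i) (E i.castSucc) (E i.succ)

/-- The straight-line drawing of the path with vertex placement `E` is planar:
non-adjacent segments are disjoint; adjacent segments meet only at the shared endpoint. -/
def PlanarDrawing {m : ℕ} (E : Fin (m + 1) → ℝ × ℝ) : Prop :=
  (∀ i j : Fin m, (i : ℕ) + 1 < (j : ℕ) →
    segment ℝ (E i.castSucc) (E i.succ) ∩ segment ℝ (E j.castSucc) (E j.succ) = ∅) ∧
  (∀ i j : Fin m, (i : ℕ) + 1 = (j : ℕ) →
    segment ℝ (E i.castSucc) (E i.succ) ∩ segment ℝ (E j.castSucc) (E j.succ) = {E i.succ})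

/-- `E` is an embedding of the path vertices onto the point set `S`. -/
def EmbOn {m : ℕ} (E : Fin (m + 1) → ℝ × ℝ) (S : Set (ℝ × ℝ)) : Prop :=
  Function.Injective E ∧ Set.range E = S

/-- Planar direction-consistent embedding of the labeled path `d` on `S`. -/
def PDCE {m : ℕ} (d : Fin m → Dir) (E : Fin (m + 1) → ℝ × ℝ) (S : Set (ℝ × ℝ)) : Prop :=
  EmbOn E S ∧ DirConsistent d E ∧ PlanarDrawing E

/-- `S` is in convex position. -/
def ConvexPos (S : Set (ℝ × ℝ)) : Prop :=
  ConvexIndependent ℝ ((↑) : S → ℝ × ℝ)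

/-- No three distinct points of `S` are collinear. -/
def NoThreeCollinear (S : Set (ℝ × ℝ)) : Prop :=
  ∀ p ∈ S, ∀ q ∈ S, ∀ r ∈ S, p ≠ q → p ≠ r → q ≠ r →
    ¬ Collinear ℝ ({p, q, r} : Set (ℝ × ℝ))

/-- General position: no three collinear, no two points with equal x- or y-coordinate. -/
def GenPos (S : Set (ℝ × ℝ)) : Prop :=
  NoThreeCollinear S ∧ ∀ p ∈ S, ∀ q ∈ S, p ≠ q → p.1 ≠ q.1 ∧ p.2 ≠ q.2

def IsTopmost (S : Set (ℝ × ℝ)) (t : ℝ × ℝ) : Prop :=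
  t ∈ S ∧ ∀ p ∈ S, p ≠ t → p.2 < t.2
def IsBottommost (S : Set (ℝ × ℝ)) (b : ℝ × ℝ) : Prop :=
  b ∈ S ∧ ∀ p ∈ S, p ≠ b → b.2 < p.2
def IsLeftmost (S : Set (ℝ × ℝ)) (l : ℝ × ℝ) : Prop :=
  l ∈ S ∧ ∀ p ∈ S, p ≠ l → l.1 < p.1
def IsRightmost (S : Set (ℝ × ℝ)) (r : ℝ × ℝ) : Prop :=
  r ∈ S ∧ ∀ p ∈ S, p ≠ r → p.1 < r.1

/-- Cross product telling on which side of the directed line `a → b` the point `p` lies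
(`0 < cross a b p` means `p` is strictly to the left). -/
def cross (a b p : ℝ × ℝ) : ℝ :=
  (b.1 - a.1) * (p.2 - a.2) - (b.2 - a.2) * (p.1 - a.1)

/-- With `b` bottommost and `t` topmost, all other points lie strictly to the left of the
line through `b` and `t`. -/
def LeftSided (S : Set (ℝ × ℝ)) (b t : ℝ × ℝ) : Prop :=
  IsBottommost S b ∧ IsTopmost S t ∧ ∀ p ∈ S, p ≠ b → p ≠ t → 0 < cross b t p

/-- With `b` bottommost and `t` topmost, all other points lie strictly to the right of the
line through `b` and `t`. -/
def RightSided (S : Set (ℝ × ℝ)) (b t : ℝ × ℝ) : Prop :=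
  IsBottommost S b ∧ IsTopmost S t ∧ ∀ p ∈ S, p ≠ b → p ≠ t → cross b t p < 0

/-- Two points of `S` are consecutive on the convex hull of `S`: all other points of `S`
lie strictly on one side of the line through them. -/
def HullConsecutive (S : Set (ℝ × ℝ)) (p q : ℝ × ℝ) : Prop :=
  p ∈ S ∧ q ∈ S ∧ p ≠ q ∧
    ((∀ r ∈ S, r ≠ p → r ≠ q → 0 < cross p q r) ∨
     (∀ r ∈ S, r ≠ p → r ≠ q → cross p q r < 0))

/-- Strip-convex point set with bottommost `b`, leftmost `l`, topmost `t`, rightmost `r`: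
`b` and `l` coincide or are hull-consecutive, and so do `t` and `r`. -/
def StripConvex (S : Set (ℝ × ℝ)) (b l t r : ℝ × ℝ) : Prop :=
  IsBottommost S b ∧ IsLeftmost S l ∧ IsTopmost S t ∧ IsRightmost S r ∧
    (b = l ∨ HullConsecutive S b l) ∧ (t = r ∨ HullConsecutive S t r)

/-- `T` is a consecutive subset of the convex point set `S` along its hull:
it can be separated from `S \ T` by a line. -/
def Consecutive (S T : Set (ℝ × ℝ)) : Prop :=
  T ⊆ S ∧ ∃ f : (ℝ × ℝ) →ₗ[ℝ] ℝ, ∃ c : ℝ,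
    (∀ p ∈ T, c < f p) ∧ ∀ p ∈ S \ T, f p < c

lemma cross_swap (a b p : ℝ × ℝ) : cross b a p = -cross a b p := by
  unfold cross; ring

lemma cross_rotate (a b c : ℝ × ℝ) : cross b c a = cross a b c := by
  unfold cross; ring

lemma cross_combo (a b x y : ℝ × ℝ) {u v : ℝ} (huv : u + v = 1) :
    cross a b (u • x + v • y) = u * cross a b x + v * cross a b y := by
  obtain rfl : v = 1 - u := by linarith
  simp only [cross, Prod.fst_add, Prod.snd_add, Prod.smul_fst, Prod.smul_snd, smul_eq_mul]
  ring

lemma convex_setOf_cross_pos (a b : ℝ × ℝ) : Convex ℝ {p | 0 < cross a b p} := by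
  intro x hx y hy u v hu hv huv
  have := convex_Ioi (0 : ℝ) hx hy hu hv huv
  simpa only [Set.mem_ofPred_eq, cross_combo a b x y huv, Set.mem_Ioi, smul_eq_mul] using this

lemma cross_eq_zero_of_mem_segment {a b p : ℝ × ℝ} (hp : p ∈ segment ℝ a b) :
    cross a b p = 0 := by
  obtain ⟨u, v, -, -, huv, rfl⟩ := hp
  rw [cross_combo a b a b huv]
  simp only [cross]; ring

lemma segment_inter_segment_eq_empty_of_cross_pos {a b p q : ℝ × ℝ}
    (hp : 0 < cross a b p) (hq : 0 < cross a b q) : segment ℝ p q ∩ segment ℝ a b = ∅ := by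
  refine Set.eq_empty_of_forall_notMem fun z ⟨hzpq, hzab⟩ => ?_
  have := (convex_setOf_cross_pos a b).segment_subset hp hq hzpq
  simp [cross_eq_zero_of_mem_segment hzab] at this

lemma segment_inter_segment_eq_singleton_of_cross_ne_zero {q r s : ℝ × ℝ}
    (h : cross r q s ≠ 0) : segment ℝ q r ∩ segment ℝ r s = {r} := by
  refine Set.eq_singleton_iff_unique_mem.2
    ⟨⟨right_mem_segment ℝ q r, left_mem_segment ℝ r s⟩, fun z ⟨hzqr, hzrs⟩ => ?_⟩
  have hz : cross r q z = 0 := cross_eq_zero_of_mem_segment (segment_symm ℝ q r ▸ hzqr)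
  obtain ⟨u, v, -, -, huv, rfl⟩ := hzrs
  rw [cross_combo r q r s huv, cross_eq_zero_of_mem_segment (left_mem_segment ℝ r q)] at hz
  obtain rfl : v = 0 := by simpa [h] using hz
  obtain rfl : u = 1 := by linarith
  simp

lemma exists_mem_segment_snd_eq {a c : ℝ × ℝ} {y : ℝ} (ha : a.2 ≤ y) (hc : y ≤ c.2) :
    ∃ z ∈ segment ℝ a c, z.2 = y := by
  obtain ⟨z, hz, hzy⟩ : y ∈ (LinearMap.snd ℝ ℝ ℝ).toAffineMap '' segment ℝ a c := by
    rw [image_segment, LinearMap.coe_toAffineMap, LinearMap.snd_apply, LinearMap.snd_apply,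
      segment_eq_Icc (ha.trans hc)]
    exact ⟨ha, hc⟩
  exact ⟨z, hz, hzy⟩

lemma cross_eq_of_mem_segment_of_snd_eq {a c z q : ℝ × ℝ} (hz : z ∈ segment ℝ a c)
    (hzq : z.2 = q.2) : cross a c q = (c.2 - a.2) * (z.1 - q.1) := by
  have := cross_eq_zero_of_mem_segment hz
  simp only [cross] at this ⊢
  rw [← hzq]
  linear_combination this

lemma mem_convexHull_of_cross {a c b t q : ℝ × ℝ} (ha : a.2 < q.2) (hc : q.2 < c.2)
    (hb : b.2 < q.2) (ht : q.2 < t.2) (hac : cross a c q ≤ 0) (hbt : 0 < cross b t q) :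
    q ∈ convexHull ℝ {a, c, b, t} := by
  -- the horizontal line through `q` meets `ac` at `l` left of `q` and `bt` at `r` right of `q`
  obtain ⟨l, hl, hly⟩ := exists_mem_segment_snd_eq ha.le hc.le
  obtain ⟨r, hr, hry⟩ := exists_mem_segment_snd_eq hb.le ht.le
  have hlq : l.1 ≤ q.1 := by
    rw [cross_eq_of_mem_segment_of_snd_eq hl hly] at hac
    nlinarith
  have hqr : q.1 ≤ r.1 := by
    rw [cross_eq_of_mem_segment_of_snd_eq hr hry] at hbt
    nlinarith
  have hq : q ∈ segment ℝ l r := by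
    rw [← Prod.mk.eta (p := l), ← Prod.mk.eta (p := r), hly, hry, ← Prod.image_mk_segment_left,
      segment_eq_Icc (hlq.trans hqr)]
    exact ⟨q.1, ⟨hlq, hqr⟩, rfl⟩
  refine (convex_convexHull ℝ _).segment_subset ?_ ?_ hq
  · exact segment_subset_convexHull (by simp) (by simp) hl
  · exact segment_subset_convexHull (by simp) (by simp) hr

lemma exists_strictMono_range_eq {α β : Type*} [LinearOrder β] {S : Set α} (hS : S.Finite)
    {n : ℕ} (hn : S.ncard = n) {f : α → β} (hf : S.InjOn f) :
    ∃ p : Fin n → α, StrictMono (f ∘ p) ∧ Set.range p = S := by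
  classical
  set T := hS.toFinset.image f
  have hT : T.card = n := by
    rw [Finset.card_image_of_injOn (by simpa using hf), ← Set.ncard_eq_toFinset_card S hS, hn]
  have hmem (i : Fin n) : ∃ a ∈ S, f a = T.orderEmbOfFin hT i := by
    simpa [T] using Finset.mem_image.1 (T.orderEmbOfFin_mem hT i)
  choose p hpS hpf using hmem
  refine ⟨p, fun i j hij => ?_, Set.Subset.antisymm (Set.range_subset_iff.2 hpS) fun a ha => ?_⟩
  · simpa only [Function.comp_apply, hpf] using (T.orderEmbOfFin hT).strictMono hij
  · obtain ⟨i, hi⟩ : f a ∈ Set.range (T.orderEmbOfFin hT) := by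
      rw [Finset.range_orderEmbOfFin]; simpa [T] using ⟨a, ha, rfl⟩
    exact ⟨i, hf (hpS i) ha ((hpf i).trans hi)⟩

section Chains

variable {ι κ : Type*} [LinearOrder ι] [LinearOrder κ]

def IsRecordSeq (σ : κ → ι) : Prop :=
  ∀ k, (∀ i < k, σ i < σ k) ∨ (∀ i < k, σ k < σ i)

lemma IsRecordSeq.injective {σ : κ → ι} (hσ : IsRecordSeq σ) : Function.Injective σ := by
  intro i j hij
  by_contra hne
  wlog h : i < j generalizing i j
  · exact this hij.symm (Ne.symm hne) (lt_of_le_of_ne (not_lt.1 h) (Ne.symm hne))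
  rcases hσ j with h' | h'
  · exact (h' i h).ne hij
  · exact (h' i h).ne' hij

lemma IsRecordSeq.snoc {n : ℕ} {σ : Fin n → κ} (hσ : IsRecordSeq σ) {e : κ → ι}
    (he : StrictMono e) {v : ι} (hv : (∀ x, e x < v) ∨ (∀ x, v < e x)) :
    IsRecordSeq (Fin.snoc (α := fun _ => ι) (e ∘ σ) v) := by
  intro k
  induction k using Fin.lastCases with
  | last =>
    rcases hv with hv | hv <;> [left; right] <;> intro i hi <;>
      obtain ⟨i, rfl⟩ := Fin.exists_castSucc_eq.2 hi.ne <;> simp [hv]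
  | cast k =>
    rcases hσ k with h | h <;> [left; right] <;> intro i hi <;>
      obtain ⟨i, rfl⟩ := Fin.exists_castSucc_eq.2 (hi.trans (Fin.castSucc_lt_last k)).ne <;>
      simpa using he (h i (Fin.castSucc_lt_castSucc_iff.1 hi))

structure IsLeftChain (p : ι → ℝ × ℝ) : Prop where
  snd_strictMono : StrictMono fun i => (p i).2
  fst_injective : Function.Injective fun i => (p i).1
  cross_pos ⦃i j k : ι⦄ : i < j → j < k → 0 < cross (p i) (p k) (p j)

namespace IsLeftChain

variable {p : ι → ℝ × ℝ}

lemma comp (hp : IsLeftChain p) {f : κ → ι} (hf : StrictMono f) : IsLeftChain (p ∘ f) where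
  snd_strictMono := hp.snd_strictMono.comp hf
  fst_injective := hp.fst_injective.comp hf.injective
  cross_pos _ _ _ hij hjk := hp.cross_pos (hf hij) (hf hjk)

lemma injective (hp : IsLeftChain p) : Function.Injective p :=
  fun _ _ h => hp.snd_strictMono.injective (congrArg Prod.snd h)

lemma cross_neg (hp : IsLeftChain p) {a c j : ι} (hac : a < c) (hj : j < a ∨ c < j) :
    cross (p a) (p c) (p j) < 0 := by
  rcases hj with hj | hj
  · linarith [hp.cross_pos hj hac, cross_rotate (p j) (p c) (p a), cross_swap (p a) (p c) (p j)]
  · linarith [hp.cross_pos hac hj, cross_rotate (p c) (p a) (p j), cross_swap (p a) (p c) (p j)]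

lemma cross_ne_zero (hp : IsLeftChain p) {i j k : ι} (hij : i ≠ j) (hik : i ≠ k) (hjk : j ≠ k) :
    cross (p i) (p j) (p k) ≠ 0 := by
  wlog h : i < j generalizing i j
  · rw [← neg_ne_zero, ← cross_swap]
    exact this hij.symm hjk hik (lt_of_le_of_ne (not_lt.1 h) hij.symm)
  rcases lt_trichotomy k i with hk | rfl | hk
  · exact (hp.cross_neg h (Or.inl hk)).ne
  · exact absurd rfl hik
  rcases lt_trichotomy k j with hk' | rfl | hk'
  · exact (hp.cross_pos hk hk').ne'
  · exact absurd rfl hjk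
  · exact (hp.cross_neg h (Or.inr hk')).ne

lemma fst_lt_max (hp : IsLeftChain p) {i j k : ι} (hij : i < j) (hjk : j < k) :
    (p j).1 < max (p i).1 (p k).1 := by
  have hcross := hp.cross_pos hij hjk
  have hy₁ := hp.snd_strictMono hij
  have hy₂ := hp.snd_strictMono hjk
  simp only [cross] at hcross
  rcases le_total (p i).1 (p k).1 with h | h
  · rw [max_eq_right h]; nlinarith
  · rw [max_eq_left h]; nlinarith

lemma segment_inter_segment_eq_empty (hp : IsLeftChain p) {a c x y : ι} (hac : a < c)
    (h : (a < x ∧ x < c ∧ a < y ∧ y < c) ∨ ((x < a ∨ c < x) ∧ (y < a ∨ c < y))) :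
    segment ℝ (p x) (p y) ∩ segment ℝ (p a) (p c) = ∅ := by
  rcases h with ⟨hax, hxc, hay, hyc⟩ | ⟨hx, hy⟩
  · exact segment_inter_segment_eq_empty_of_cross_pos (hp.cross_pos hax hxc) (hp.cross_pos hay hyc)
  · rw [segment_symm ℝ (p a)]
    refine segment_inter_segment_eq_empty_of_cross_pos ?_ ?_ <;>
      rw [cross_swap, neg_pos] <;> exact hp.cross_neg hac ‹_›

lemma planarDrawing_comp (hp : IsLeftChain p) {m : ℕ} {σ : Fin (m + 1) → ι}
    (hσ : IsRecordSeq σ) : PlanarDrawing (p ∘ σ) := by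
  refine ⟨fun i j hij => ?_, fun i j hij => ?_⟩
  · have h₁ : i.castSucc < j.castSucc := Fin.lt_def.2 (by simp only [Fin.val_castSucc]; omega)
    have h₂ : i.succ < j.castSucc :=
      Fin.lt_def.2 (by simp only [Fin.val_castSucc, Fin.val_succ]; omega)
    have h₃ : j.castSucc < j.succ := Fin.castSucc_lt_succ
    simp only [Function.comp_apply]
    -- both endpoints of edge `j` are records, so the vertices of edge `i` are on one side of it
    rcases hσ j.succ with hc | hc <;> rcases hσ j.castSucc with ha | ha
    · exact hp.segment_inter_segment_eq_empty (hc _ h₃)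
        (Or.inr ⟨Or.inl (ha _ h₁), Or.inl (ha _ h₂)⟩)
    · exact hp.segment_inter_segment_eq_empty (hc _ h₃)
        (Or.inl ⟨ha _ h₁, hc _ (h₁.trans h₃), ha _ h₂, hc _ (h₂.trans h₃)⟩)
    · rw [segment_symm ℝ (p (σ j.castSucc))]
      exact hp.segment_inter_segment_eq_empty (hc _ h₃)
        (Or.inl ⟨hc _ (h₁.trans h₃), ha _ h₁, hc _ (h₂.trans h₃), ha _ h₂⟩)
    · rw [segment_symm ℝ (p (σ j.castSucc))]
      exact hp.segment_inter_segment_eq_empty (hc _ h₃)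
        (Or.inr ⟨Or.inr (ha _ h₁), Or.inr (ha _ h₂)⟩)
  · have hji : j.castSucc = i.succ := Fin.ext (by simp [← hij])
    simp only [Function.comp_apply, hji]
    have hinj := hσ.injective
    refine segment_inter_segment_eq_singleton_of_cross_ne_zero (hp.cross_ne_zero ?_ ?_ ?_)
    all_goals refine hinj.ne (Fin.ne_of_val_ne ?_)
    all_goals simp only [Fin.val_castSucc, Fin.val_succ]; omega

end IsLeftChain

end Chains

lemma LeftSided.isLeftChain {S : Set (ℝ × ℝ)} {b t : ℝ × ℝ} (hside : LeftSided S b t)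
    (hconv : ConvexPos S) (hgen : GenPos S) {n : ℕ} {p : Fin (n + 1) → ℝ × ℝ}
    (hy : StrictMono fun i => (p i).2) (hrange : Set.range p = S) :
    IsLeftChain p ∧ p 0 = b ∧ p (Fin.last n) = t := by
  obtain ⟨⟨hbS, hbot⟩, ⟨htS, htop⟩, hleft⟩ := hside
  have hpS (i : Fin (n + 1)) : p i ∈ S := hrange ▸ Set.mem_range_self i
  have hinj : Function.Injective p := fun _ _ h => hy.injective (congrArg Prod.snd h)
  have hb : p 0 = b := by
    by_contra h
    obtain ⟨i, rfl⟩ := hrange ▸ hbS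
    linarith [hbot _ (hpS 0) h, hy.monotone (Fin.zero_le i)]
  have ht : p (Fin.last n) = t := by
    by_contra h
    obtain ⟨i, rfl⟩ := hrange ▸ htS
    linarith [htop _ (hpS _) h, hy.monotone (Fin.le_last i)]
  refine ⟨⟨hy, fun i j h => ?_, fun i j k hij hjk => ?_⟩, hb, ht⟩
  · by_contra hne
    exact (hgen.2 _ (hpS i) _ (hpS j) (hinj.ne hne)).1 h
  · by_contra hle
    have h0j : 0 < j := (Fin.zero_le i).trans_lt hij
    have hjl : j < Fin.last n := hjk.trans_le (Fin.le_last k)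
    have hjb : p j ≠ b := hb ▸ hinj.ne h0j.ne'
    have hjt : p j ≠ t := ht ▸ hinj.ne hjl.ne
    have hmem : p j ∈ convexHull ℝ {p i, p k, b, t} :=
      mem_convexHull_of_cross (hy hij) (hy hjk) (hb ▸ hy h0j) (ht ▸ hy hjl) (not_lt.1 hle)
        (hleft _ (hpS j) hjb hjt)
    refine convexIndependent_set_iff_notMem_convexHull_sdiff.1 hconv _ (hpS j)
      (convexHull_mono ?_ hmem)
    simp only [Set.insert_subset_iff, Set.singleton_subset_iff, Set.mem_sdiff,
      Set.mem_singleton_iff]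
    exact ⟨⟨hpS i, hinj.ne hij.ne⟩, ⟨hpS k, hinj.ne hjk.ne'⟩, ⟨hbS, hjb.symm⟩, ⟨htS, hjt.symm⟩⟩

lemma dirConsistent_snoc {n : ℕ} {d : Fin (n + 1) → Dir} {E : Fin (n + 1) → ℝ × ℝ}
    {w : ℝ × ℝ} :
    DirConsistent d (Fin.snoc (α := fun _ => ℝ × ℝ) E w) ↔
      DirConsistent (Fin.init d) E ∧ dirOk (d (Fin.last n)) (E (Fin.last n)) w := by
  simp only [DirConsistent, Fin.forall_fin_succ', Fin.init, Fin.succ_castSucc, Fin.snoc_castSucc,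
    Fin.succ_last, Fin.snoc_last]

lemma exists_strictMono_lt_or_gt {n : ℕ} {v : Fin (n + 2)} (hv : v = 0 ∨ v = Fin.last (n + 1)) :
    ∃ e : Fin (n + 1) → Fin (n + 2), StrictMono e ∧ ((∀ x, e x < v) ∨ (∀ x, v < e x)) := by
  rcases hv with rfl | rfl
  · exact ⟨Fin.succ, Fin.strictMono_succ, Or.inr Fin.succ_pos⟩
  · exact ⟨Fin.castSucc, Fin.strictMono_castSucc, Or.inl Fin.castSucc_lt_last⟩

namespace IsLeftChain

lemma exists_endpoint {n : ℕ} {p : Fin (n + 1) → ℝ × ℝ} (hp : IsLeftChain p) {dir : Dir}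
    (hdir : dir ≠ .L) :
    ∃ v, (v = 0 ∨ v = Fin.last n) ∧ (dir = .U → v = Fin.last n) ∧ (dir = .D → v = 0) ∧
      ∀ j ≠ v, dirOk dir (p j) (p v) := by
  cases dir
  · exact ⟨Fin.last n, Or.inr rfl, fun _ => rfl, nofun,
      fun j hj => hp.snd_strictMono (lt_of_le_of_ne (Fin.le_last j) hj)⟩
  · exact ⟨0, Or.inl rfl, nofun, fun _ => rfl,
      fun j hj => hp.snd_strictMono (Fin.pos_of_ne_zero hj)⟩
  · exact absurd rfl hdir
  · by_cases h : (p 0).1 < (p (Fin.last n)).1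
    · refine ⟨Fin.last n, Or.inr rfl, nofun, nofun, fun j hj => ?_⟩
      rcases eq_or_ne j 0 with rfl | hj0
      · exact h
      · exact (hp.fst_lt_max (Fin.pos_of_ne_zero hj0) (lt_of_le_of_ne (Fin.le_last j) hj)).trans_le
          (max_le h.le le_rfl)
    · refine ⟨0, Or.inl rfl, nofun, nofun, fun j hj => ?_⟩
      rcases eq_or_ne j (Fin.last n) with rfl | hjl
      · exact lt_of_le_of_ne (not_lt.1 h) (hp.fst_injective.ne hj)
      · exact (hp.fst_lt_max (Fin.pos_of_ne_zero hj) (lt_of_le_of_ne (Fin.le_last j) hjl)).trans_le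
          (max_le le_rfl (not_lt.1 h))

lemma exists_recordSeq_snoc {n : ℕ} {p : Fin (n + 2) → ℝ × ℝ} (hp : IsLeftChain p)
    {d : Fin (n + 1) → Dir}
    (ih : ∀ q : Fin (n + 1) → ℝ × ℝ, IsLeftChain q →
      ∃ σ : Fin (n + 1) → Fin (n + 1), IsRecordSeq σ ∧ DirConsistent (Fin.init d) (q ∘ σ))
    {v : Fin (n + 2)} (hv : v = 0 ∨ v = Fin.last (n + 1))
    (hdir : ∀ j ≠ v, dirOk (d (Fin.last n)) (p j) (p v)) :
    ∃ σ : Fin (n + 2) → Fin (n + 2), IsRecordSeq σ ∧ DirConsistent d (p ∘ σ) ∧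
      σ (Fin.last (n + 1)) = v := by
  obtain ⟨e, he, hev⟩ := exists_strictMono_lt_or_gt hv
  obtain ⟨σ, hσ, hdσ⟩ := ih (p ∘ e) (hp.comp he)
  refine ⟨Fin.snoc (e ∘ σ) v, hσ.snoc he hev, ?_, Fin.snoc_last _ _⟩
  rw [Fin.comp_snoc, dirConsistent_snoc]
  refine ⟨hdσ, hdir _ ?_⟩
  rcases hev with h | h
  exacts [(h _).ne, (h _).ne']

lemma exists_recordSeq_dirConsistent : ∀ {n : ℕ} {p : Fin (n + 1) → ℝ × ℝ}, IsLeftChain p →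
    ∀ {d : Fin n → Dir}, (∀ i, d i ≠ .L) →
      ∃ σ : Fin (n + 1) → Fin (n + 1), IsRecordSeq σ ∧ DirConsistent d (p ∘ σ)
  | 0, _, _, _, _ =>
    ⟨id, fun _ => Or.inl fun _ hi => (hi.ne (Fin.ext (by omega))).elim, fun i => i.elim0⟩
  | _ + 1, _, hp, _, hd => by
    obtain ⟨v, hv, -, -, hdir⟩ := hp.exists_endpoint (hd (Fin.last _))
    obtain ⟨σ, hσ, hdσ, -⟩ := hp.exists_recordSeq_snoc
      (fun _ hq => exists_recordSeq_dirConsistent hq fun _ => hd _) hv hdir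
    exact ⟨σ, hσ, hdσ⟩

lemma pdce_comp {m : ℕ} {p : Fin (m + 1) → ℝ × ℝ} (hp : IsLeftChain p)
    {σ : Fin (m + 1) → Fin (m + 1)} (hσ : IsRecordSeq σ) {d : Fin m → Dir}
    (hd : DirConsistent d (p ∘ σ)) : PDCE d (p ∘ σ) (Set.range p) :=
  ⟨⟨hp.injective.comp hσ.injective,
    (Finite.injective_iff_surjective.1 hσ.injective).range_comp p⟩, hd, hp.planarDrawing_comp hσ⟩

end IsLeftChain

/-- any {U,D,R}-path has a PDCE on a left-sided convex point set, with the
last vertex on t(S), b(S), or on the rightmost point (which is t(S) or b(S)),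
according to the last label. -/
theorem leftSided_UDR_pdce {m : ℕ} (hm : 0 < m) (d : Fin m → Dir)
    (hd : ∀ i, d i ≠ Dir.L) (S : Set (ℝ × ℝ)) (hfin : S.Finite)
    (hcard : S.ncard = m + 1) (hconv : ConvexPos S) (hgen : GenPos S)
    (b t : ℝ × ℝ) (hside : LeftSided S b t) :
    ∃ E : Fin (m + 1) → ℝ × ℝ, PDCE d E S ∧
      (d ⟨m - 1, Nat.sub_lt hm one_pos⟩ = Dir.U → E (Fin.last m) = t) ∧
      (d ⟨m - 1, Nat.sub_lt hm one_pos⟩ = Dir.D → E (Fin.last m) = b) ∧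
      (d ⟨m - 1, Nat.sub_lt hm one_pos⟩ = Dir.R →
        IsRightmost S (E (Fin.last m)) ∧ (E (Fin.last m) = t ∨ E (Fin.last m) = b)) := by
  obtain ⟨n, rfl⟩ : ∃ n, m = n + 1 := ⟨m - 1, by omega⟩
  obtain ⟨p, hy, hrange⟩ := exists_strictMono_range_eq hfin hcard
    (f := Prod.snd) fun x hx x' hx' h => by_contra fun hne => (hgen.2 x hx x' hx' hne).2 h
  obtain ⟨hp, hb, ht⟩ := hside.isLeftChain hconv hgen hy hrange
  subst hrange
  have hlast : d ⟨n + 1 - 1, Nat.sub_lt hm one_pos⟩ = d (Fin.last n) := rfl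
  obtain ⟨v, hv, hvU, hvD, hdir⟩ := hp.exists_endpoint (hd (Fin.last n))
  obtain ⟨σ, hσ, hdσ, hσv⟩ := hp.exists_recordSeq_snoc
    (fun _ hq => hq.exists_recordSeq_dirConsistent fun _ => hd _) hv hdir
  refine ⟨p ∘ σ, hp.pdce_comp hσ hdσ, ?_⟩
  rw [hlast, Function.comp_apply, hσv]
  refine ⟨fun hU => hvU hU ▸ ht, fun hD => hvD hD ▸ hb, fun hR => ⟨⟨Set.mem_range_self v, ?_⟩, ?_⟩⟩
  · rintro _ ⟨j, rfl⟩ hj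
    simpa only [hR, dirOk] using hdir j (ne_of_apply_ne p hj)
  · rcases hv with rfl | rfl
    exacts [Or.inr hb, Or.inl ht]
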